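/- Let n ≥ 1 and k ≥ 0 be integers. Define the sequence of pairs (p_j, q_j) = (4n + 2j, n·(4n + 2j) − 1) for 0 ≤ j ≤ k. Then for every j with 1 ≤ j ≤ k, applying the pinch-move parameter map (p, q) ↦ (|p − 2t|, |q − 2h|), where t is the unique integer in {0, …, p−1} with q·t ≡ −1 (mod p) and h is the unique integer in {0, …, q−1} with p·h ≡ 1 (mod q), sends (p_j, q_j) to (p_{j−1}, q_{j−1}). In particular, k successive applications of this map send (4n + 2k, n·(4n + 2k) − 1) to (4n, 4n² − 1). -/
import Mathlib


open Classical

/-- The pinch-move parameter map `(p, q) ↦ (|p - 2t|, |q - 2h|)`, where `t` is the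
unique integer in `{0, …, p-1}` with `q*t ≡ -1 (mod p)` and `h` is the unique
integer in `{0, …, q-1}` with `p*h ≡ 1 (mod q)` (identity if such unique `t`, `h`
fail to exist). -/

noncomputable def pinchMap (pq : ℤ × ℤ) : ℤ × ℤ :=
  if H : (∃! t : ℤ, 0 ≤ t ∧ t ≤ pq.1 - 1 ∧ pq.1 ∣ pq.2 * t + 1) ∧
      (∃! h : ℤ, 0 ≤ h ∧ h ≤ pq.2 - 1 ∧ pq.2 ∣ pq.1 * h - 1) then
    (|pq.1 - 2 * H.1.choose|, |pq.2 - 2 * H.2.choose|)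
  else pq

lemma pinch_step (n p : ℤ) (hn : 1 ≤ n) (hp : 3 ≤ p) :
    pinchMap (p, n * p - 1) = (p - 2, n * (p - 2) - 1) := by
  set q : ℤ := n * p - 1 with hq
  have hq2 : 2 ≤ q := by nlinarith
  have H1 : ∃! t : ℤ, 0 ≤ t ∧ t ≤ p - 1 ∧ p ∣ q * t + 1 := by
    refine ⟨1, ⟨by norm_num, by omega, ⟨n, by rw [hq]; ring⟩⟩, ?_⟩
    rintro y ⟨hy0, hy1, c, hc⟩
    have hd : p ∣ y - 1 := ⟨n * y - c, by nlinarith [hc]⟩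
    have := Int.eq_zero_of_abs_lt_dvd hd (by rw [abs_lt]; omega)
    omega
  have H2 : ∃! h : ℤ, 0 ≤ h ∧ h ≤ q - 1 ∧ q ∣ p * h - 1 := by
    have hnq : n ≤ q - 1 := by nlinarith
    refine ⟨n, ⟨by omega, hnq, ⟨1, by rw [hq]; ring⟩⟩, ?_⟩
    rintro y ⟨hy0, hy1, hd⟩
    have hdm : q ∣ p * (y - n) := by
      have : p * (y - n) = (p * y - 1) - q := by rw [hq]; ring
      rw [this]
      exact dvd_sub hd dvd_rfl
    have hcop : IsCoprime q p := ⟨-1, n, by rw [hq]; ring⟩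
    have : q ∣ y - n := hcop.dvd_of_dvd_mul_left hdm
    have := Int.eq_zero_of_abs_lt_dvd this (by rw [abs_lt]; omega)
    omega
  have H : (∃! t : ℤ, 0 ≤ t ∧ t ≤ (p, q).1 - 1 ∧ (p, q).1 ∣ (p, q).2 * t + 1) ∧
      (∃! h : ℤ, 0 ≤ h ∧ h ≤ (p, q).2 - 1 ∧ (p, q).2 ∣ (p, q).1 * h - 1) := ⟨H1, H2⟩
  rw [pinchMap, dif_pos H]
  have ht : H.1.choose = 1 :=
    H1.unique H.1.choose_spec.1 ⟨by norm_num, by omega, ⟨n, by rw [hq]; ring⟩⟩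
  have hh : H.2.choose = n :=
    H2.unique H.2.choose_spec.1 ⟨by omega, by nlinarith, ⟨1, by rw [hq]; ring⟩⟩
  rw [ht, hh]
  have h1 : |p - 2 * 1| = p - 2 := abs_of_nonneg (by omega)
  have h2 : |q - 2 * n| = n * (p - 2) - 1 := by
    rw [abs_of_nonneg (by nlinarith)]; rw [hq]; ring
  simp only [h1, h2]

/-- For `1 ≤ j ≤ k`, the pinch-move parameter map sends
`(4n+2j, n(4n+2j) - 1)` to `(4n+2(j-1), n(4n+2(j-1)) - 1)`; in particular `k`
successive applications send `(4n+2k, n(4n+2k) - 1)` to `(4n, 4n² - 1)`. -/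
theorem pinch_iterates_family_n (n : ℤ) (k : ℕ) (hn : 1 ≤ n) :
    (∀ j : ℕ, 1 ≤ j → j ≤ k →
      pinchMap (4 * n + 2 * (j : ℤ), n * (4 * n + 2 * (j : ℤ)) - 1) =
        (4 * n + 2 * ((j : ℤ) - 1), n * (4 * n + 2 * ((j : ℤ) - 1)) - 1)) ∧
    pinchMap^[k] (4 * n + 2 * (k : ℤ), n * (4 * n + 2 * (k : ℤ)) - 1) =
      (4 * n, 4 * n ^ 2 - 1) := by
  have step : ∀ j : ℕ, 1 ≤ j →
      pinchMap (4 * n + 2 * (j : ℤ), n * (4 * n + 2 * (j : ℤ)) - 1) =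
        (4 * n + 2 * ((j : ℤ) - 1), n * (4 * n + 2 * ((j : ℤ) - 1)) - 1) := by
    intro j hj
    have hj1 : (1 : ℤ) ≤ (j : ℤ) := by exact_mod_cast hj
    have h := pinch_step n (4 * n + 2 * (j : ℤ)) hn (by omega)
    convert h using 2 <;> ring
  refine ⟨fun j hj _ => step j hj, ?_⟩
  induction k with
  | zero => simp; ring_nf
  | succ m ih =>
    rw [Function.iterate_succ_apply]
    have h := step (m + 1) (by omega)
    push_cast at h ⊢
    rw [h]
    convert ih using 2 <;> push_cast <;> ring
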